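/- arXiv:1607.07828 — 9 statements merged into one kernel-verified Lean document; each statement's English description precedes it below -/
import Mathlib

section
/- Let f : X → X be a permutation of a set X and W ⊆ X a finite subset. Define f|_W by f|_W(v) = f(v) if v ∈ W, and otherwise f|_W(v) = f^{-n}(v) where n ≥ 0 is minimal such that f^{-n}(v) ∉ f[W]. Then f|_W is well-defined (such an n exists for every v ∉ W) and is a bijection of X. -/
/-- The restriction of a permutation `f` to a finite subset `W`:
`f|_W v = f v` for `v ∈ W`, and otherwise `f|_W v = f⁻ⁿ v` for the minimal `n ≥ 0`
with `f⁻ⁿ v ∉ f[W]`. -/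
noncomputable def restrictPerm {X : Type*} [DecidableEq X] (f : Equiv.Perm X) (W : Finset X) :
    X → X :=
  fun v => if v ∈ W then f v
    else f.symm^[sInf {n : ℕ | f.symm^[n] v ∉ ⇑f '' (W : Set X)}] v

/-!
A point `v ∉ W` cannot have its whole backward orbit inside the finite set `f[W]`: the orbit
would be periodic and pass through `W`, and hence so would `v`. The map `f|_W` is inverted by
`(f⁻¹)|_{f[W]}`: for `v ∉ W` with minimal index `n`, the forward orbit of `y = f⁻ⁿ v` stays in `W`
exactly until it returns to `v` after `n` steps. Applying this to `f⁻¹` and `f[W]` gives the other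
composition, so `f|_W` is a bijection.
-/

open Function

theorem Function.Injective.mem_of_forall_iterate_succ_mem {X : Type*} {e : X → X}
    (he : Injective e) {A : Set X} (hA : A.Finite) {v : X} (h : ∀ n, e^[n + 1] v ∈ A) :
    v ∈ A := by
  have : Finite A := hA
  obtain ⟨i, j, hne, hij⟩ :=
    Finite.exists_ne_map_eq_of_infinite (fun n : ℕ => (⟨e^[n + 1] v, h n⟩ : A))
  wlog hlt : i < j generalizing i j
  · exact this j i hne.symm hij.symm (by omega)
  have hperiod : e^[j - i] v = v := by
    apply he.iterate (i + 1)
    rw [← iterate_add_apply, show i + 1 + (j - i) = j + 1 by omega]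
    exact (congrArg Subtype.val hij).symm
  have := h (j - i - 1)
  rwa [show j - i - 1 + 1 = j - i by omega, hperiod] at this

theorem Equiv.Perm.iterate_apply_iterate_symm_of_le {X : Type*} (f : Equiv.Perm X) {k n : ℕ}
    (hkn : k ≤ n) (v : X) : f^[k] (f.symm^[n] v) = f.symm^[n - k] v := by
  obtain ⟨m, rfl⟩ := Nat.exists_eq_add_of_le hkn
  have hinv : LeftInverse f f.symm := f.apply_symm_apply
  rw [iterate_add_apply, hinv.iterate k, Nat.add_sub_cancel_left]

section

variable {X : Type*} (f : Equiv.Perm X) (W : Finset X)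

theorem nonempty_setOf_iterate_symm_notMem_image {v : X} (hv : v ∉ W) :
    {n : ℕ | f.symm^[n] v ∉ ⇑f '' (W : Set X)}.Nonempty := by
  by_contra! h
  refine hv (f.symm.injective.mem_of_forall_iterate_succ_mem W.finite_toSet fun n => ?_)
  rw [iterate_succ_apply', ← Set.mem_image_equiv]
  by_contra hn
  exact h.subset hn

variable [DecidableEq X]

theorem restrictPerm_of_mem {v : X} (hv : v ∈ W) : restrictPerm f W v = f v := if_pos hv

theorem restrictPerm_of_notMem {v : X} (hv : v ∉ W) :
    restrictPerm f W v = f.symm^[sInf {n : ℕ | f.symm^[n] v ∉ ⇑f '' (W : Set X)}] v := if_neg hv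

theorem leftInverse_restrictPerm_symm_image :
    LeftInverse (restrictPerm f.symm (W.image f)) (restrictPerm f W) := by
  intro v
  by_cases hv : v ∈ W
  · rw [restrictPerm_of_mem f W hv, restrictPerm_of_mem _ _ (Finset.mem_image_of_mem f hv),
      f.symm_apply_apply]
  set n := sInf {n : ℕ | f.symm^[n] v ∉ ⇑f '' (W : Set X)}
  have hn : f.symm^[n] v ∉ ⇑f '' (W : Set X) :=
    Nat.sInf_mem (nonempty_setOf_iterate_symm_notMem_image f W hv)
  have hlt : ∀ k < n, f.symm^[k] v ∈ ⇑f '' (W : Set X) := fun k hk =>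
    not_not.mp (Nat.notMem_of_lt_sInf hk)
  have hleast : IsLeast {k : ℕ | f^[k] (f.symm^[n] v) ∉ W} n := by
    refine ⟨?_, fun k hk => ?_⟩
    · show f^[n] (f.symm^[n] v) ∉ W
      rwa [f.iterate_apply_iterate_symm_of_le le_rfl, Nat.sub_self]
    by_contra! hkn
    apply hk
    have := Set.mem_image_equiv.mp (hlt (n - k - 1) (by omega))
    rwa [f.iterate_apply_iterate_symm_of_le hkn.le, show n - k = n - k - 1 + 1 by omega,
      iterate_succ_apply']
  rw [restrictPerm_of_notMem f W hv,
    restrictPerm_of_notMem _ _ (by rwa [← Finset.mem_coe, Finset.coe_image])]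
  simp only [Equiv.symm_symm, Finset.coe_image, Equiv.symm_image_image, Finset.mem_coe]
  rw [hleast.csInf_eq, f.iterate_apply_iterate_symm_of_le le_rfl, Nat.sub_self, iterate_zero_apply]

end

/-- `f|_W` is well-defined (for every `v ∉ W` some `n` with `f⁻ⁿ v ∉ f[W]` exists)
and is a bijection of `X`. -/
theorem stmt0 {X : Type*} [DecidableEq X] (f : Equiv.Perm X) (W : Finset X) :
    (∀ v : X, v ∉ W → {n : ℕ | f.symm^[n] v ∉ ⇑f '' (W : Set X)}.Nonempty) ∧
    Function.Bijective (restrictPerm f W) := by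
  have hright : LeftInverse (restrictPerm f W) (restrictPerm f.symm (W.image f)) := by
    simpa [Finset.image_image] using leftInverse_restrictPerm_symm_image f.symm (W.image f)
  exact ⟨fun v => nonempty_setOf_iterate_symm_notMem_image f W,
    (leftInverse_restrictPerm_symm_image f W).injective, hright.surjective⟩
end

section
/- Let f : X → X be a permutation and W ⊆ X finite, and let f|_W be the restriction of f to W as defined above. Then f|_W is a finite permutation, i.e., f|_W(v) = v for all v outside the finite set W ∪ f[W]. -/
open Function Set

theorem Function.Injective.exists_iterate_notMem_of_notMem_image {X : Type*} {g : X → X}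
    (hg : Injective g) {A : Set X} (hA : A.Finite) {v : X} (hv : v ∉ g '' A) :
    ∃ n, g^[n] v ∉ A := by
  by_contra! hall
  set orbit := range fun n => g^[n] v
  have horbit : orbit ⊆ A := range_subset_iff.2 hall
  have hmaps : MapsTo g orbit orbit := by
    rintro _ ⟨n, rfl⟩
    exact ⟨n + 1, iterate_succ_apply' g n v⟩
  have hbij := ((hA.subset horbit).injOn_iff_bijOn_of_mapsTo hmaps).1 hg.injOn
  obtain ⟨w, hw, rfl⟩ := hbij.surjOn ⟨0, rfl⟩
  exact hv ⟨w, horbit hw, rfl⟩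

theorem restrictPerm_of_notMem_of_notMem_image {X : Type*} [DecidableEq X] (f : Equiv.Perm X)
    (W : Finset X) {v : X} (hvW : v ∉ W) (hv : v ∉ f '' (W : Set X)) :
    restrictPerm f W v = v := by
  rw [restrictPerm, if_neg hvW, Nat.sInf_eq_zero.2 (Or.inl hv), iterate_zero_apply]

theorem restrictPerm_restrictPerm_symm {X : Type*} [DecidableEq X] (f : Equiv.Perm X)
    (W V : Finset X) (hV : (V : Set X) = f '' W) (v : X) :
    restrictPerm f W (restrictPerm f.symm V v) = v := by
  have hWV : f.symm '' (V : Set X) = W := by rw [hV, Equiv.symm_image_image]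
  by_cases hvV : v ∈ V
  · have hW : f.symm v ∈ W := Finset.mem_coe.1 (mem_image_equiv.1 (hV ▸ hvV))
    simp only [restrictPerm, if_pos hvV, if_pos hW, Equiv.apply_symm_apply]
  have hv : v ∉ f '' (W : Set X) := hV ▸ hvV
  simp only [restrictPerm, if_neg hvV, Equiv.symm_symm, hWV]
  set m := sInf {n : ℕ | f^[n] v ∉ (W : Set X)}
  have hexit : f^[m] v ∉ W :=
    Nat.sInf_mem (f.injective.exists_iterate_notMem_of_notMem_image W.finite_toSet hv)
  have hback : f.symm^[m] (f^[m] v) = v := f.left_inv.iterate m v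
  suffices hm : sInf {n : ℕ | f.symm^[n] (f^[m] v) ∉ f '' (W : Set X)} = m by
    rw [if_neg hexit, hm, hback]
  refine IsLeast.csInf_eq ⟨by simpa only [mem_ofPred_eq, hback] using hv, fun k hk => ?_⟩
  by_contra! hkm
  obtain ⟨j, hj⟩ := Nat.exists_eq_add_of_lt hkm
  refine hk ⟨f^[j] v, not_not.1 (Nat.notMem_of_lt_sInf (show j < m by omega)), ?_⟩
  rw [hj, add_assoc, iterate_add_apply]
  exact ((f.left_inv.iterate k _).trans (iterate_succ_apply' f j v)).symm

/-- The restriction `f|_W` is a finite permutation: it is a bijection and fixes every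
element outside the finite set `W ∪ f[W]`. -/
theorem stmt1 {X : Type*} [DecidableEq X] (f : Equiv.Perm X) (W : Finset X) :
    Function.Bijective (restrictPerm f W) ∧
    ∀ v : X, v ∉ (W : Set X) ∪ ⇑f '' (W : Set X) → restrictPerm f W v = v := by
  have hmap : (W.map f.toEmbedding : Set X) = f '' W := by simp
  have hsymm : (W : Set X) = f.symm '' (W.map f.toEmbedding : Set X) := by
    rw [hmap, Equiv.symm_image_image]
  refine ⟨bijective_iff_has_inverse.2 ⟨restrictPerm f.symm (W.map f.toEmbedding), ?_, ?_⟩, ?_⟩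
  · exact restrictPerm_restrictPerm_symm f.symm _ W hsymm
  · exact restrictPerm_restrictPerm_symm f W _ hmap
  · intro v hv
    rw [mem_union, not_or] at hv
    exact restrictPerm_of_notMem_of_notMem_image f W hv.1 hv.2
end

section
/- For an element x of a nominal set X, the number of elements y in the orbit of x with supp(y) = supp(x) is at most |supp(x)|! (factorial of the size of the support of x). -/
/-- The subgroup of finite (finitary) permutations of the set `𝕍` of atoms. -/
def FinPerm (𝕍 : Type*) : Subgroup (Equiv.Perm 𝕍) where
  carrier := {π | {a | π a ≠ a}.Finite}
  one_mem' := by simp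
  mul_mem' := by
    intro π σ hπ hσ
    apply Set.Finite.subset (hσ.union (hπ.preimage σ.injective.injOn))
    intro a ha
    by_cases h : σ a = a
    · right
      simp only [Set.mem_preimage, Set.mem_setOf_eq]
      simpa [Equiv.Perm.mul_apply, h] using ha
    · exact Or.inl h
  inv_mem' := by
    intro π hπ
    have : {a | π⁻¹ a ≠ a} = {a | π a ≠ a} := by
      ext a
      simp only [Set.mem_setOf_eq, not_iff_not]
      rw [Equiv.Perm.inv_eq_iff_eq, eq_comm]
    show {a | π⁻¹ a ≠ a}.Finite
    rw [this]
    exact hπ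

/-
Any `π` carrying `x` to an element `y` with the same support maps `supp x` onto itself: the
support is equivariant up to inclusion (`supp (π • x) ⊆ π • supp x`, by minimality), and both sides
have the same cardinality. Moreover `π • x` only depends on the restriction of `π` to `supp x`.
Hence `y ↦ π|_{supp x}` is an injection from these elements into the permutations of `supp x`.
-/

open Pointwise

namespace MulAction

variable {G α β : Type*} [Group G] [MulAction G α] [MulAction G β]

theorem Supports.smul_of_group {s : Set α} {b : β} (h : Supports G s b) (g : G) :
    Supports G (g • s) (g • b) := by
  intro g' hg'
  have hconj : (g⁻¹ * g' * g) • b = b := h _ fun a ha => by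
    rw [mul_smul, mul_smul, hg' (Set.smul_mem_smul_set ha), inv_smul_smul]
  calc g' • g • b = g • (g⁻¹ * g' * g) • b := by simp only [mul_smul, smul_inv_smul]
    _ = g • b := by rw [hconj]

theorem smul_eq_smul_of_eqOn_of_supports {s : Set α} {b : β} (h : Supports G s b) {g g' : G}
    (hgg' : ∀ a ∈ s, g • a = g' • a) : g • b = g' • b := by
  have hfix : (g'⁻¹ * g) • b = b := h _ fun a ha => by
    rw [mul_smul, hgg' a ha, inv_smul_smul]
  calc g • b = g' • (g'⁻¹ * g) • b := by rw [mul_smul, smul_inv_smul]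
    _ = g' • b := by rw [hfix]

variable [DecidableEq α] (supp : β → Finset α)

theorem smul_finset_eq_of_supp_smul_eq
    (hsupp : ∀ b, Supports G (supp b : Set α) b)
    (hmin : ∀ b (s : Finset α), Supports G (s : Set α) b → supp b ⊆ s)
    {g : G} {b : β} (hg : supp (g • b) = supp b) : g • supp b = supp b := by
  have hsub : supp b ⊆ g • supp b := calc
    supp b = supp (g • b) := hg.symm
    _ ⊆ g • supp b :=
      hmin _ _ (by simpa only [Finset.coe_smul_finset] using (hsupp b).smul_of_group g)
  exact (Finset.eq_of_subset_of_card_le hsub (Finset.card_smul_finset g _).le).symm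

theorem finite_and_ncard_le_factorial_of_supp_eq
    (hsupp : ∀ b, Supports G (supp b : Set α) b)
    (hmin : ∀ b (s : Finset α), Supports G (s : Set α) b → supp b ⊆ s) (b : β) :
    {y | y ∈ orbit G b ∧ supp y = supp b}.Finite ∧
      {y | y ∈ orbit G b ∧ supp y = supp b}.ncard ≤ (supp b).card.factorial := by
  set T := {y | y ∈ orbit G b ∧ supp y = supp b}
  choose g hg using fun y : T => y.2.1
  have hmem : ∀ y a, g y • a ∈ supp b ↔ a ∈ supp b := fun y a => by
    conv_lhs => rw [← smul_finset_eq_of_supp_smul_eq supp hsupp hmin ((hg y).symm ▸ y.2.2)]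
    exact Finset.smul_mem_smul_finset_iff _
  let restrict : T → Equiv.Perm (supp b) := fun y => (toPerm (g y)).subtypePerm (hmem y)
  have restrict_injective : Function.Injective restrict := fun y z hyz => Subtype.ext <| by
    rw [← hg y, ← hg z]
    refine smul_eq_smul_of_eqOn_of_supports (hsupp b) fun a ha => ?_
    exact congrArg Subtype.val (Equiv.ext_iff.mp hyz ⟨a, ha⟩)
  have : Finite T := Finite.of_injective restrict restrict_injective
  refine ⟨Set.toFinite T, ?_⟩
  calc T.ncard = Nat.card T := (Nat.card_coe_set_eq T).symm
    _ ≤ Nat.card (Equiv.Perm (supp b)) := Nat.card_le_card_of_injective restrict restrict_injective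
    _ = (supp b).card.factorial := by
      rw [Nat.card_eq_fintype_card, Fintype.card_perm, Fintype.card_coe]

end MulAction

theorem stmt7_general {𝕍 X : Type*} [MulAction (FinPerm 𝕍) X]
    (supp : X → Finset 𝕍)
    (hsupp : ∀ (x : X) (π : FinPerm 𝕍), (∀ a ∈ supp x, π • a = a) → π • x = x)
    (hmin : ∀ (x : X) (S : Finset 𝕍),
      (∀ π : FinPerm 𝕍, (∀ a ∈ S, π • a = a) → π • x = x) → supp x ⊆ S)
    (x : X) :
    {y | y ∈ MulAction.orbit (FinPerm 𝕍) x ∧ supp y = supp x}.Finite ∧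
    {y | y ∈ MulAction.orbit (FinPerm 𝕍) x ∧ supp y = supp x}.ncard
      ≤ Nat.factorial (supp x).card := by
  classical
  exact MulAction.finite_and_ncard_le_factorial_of_supp_eq supp
    (fun y π hπ => hsupp y π fun a ha => hπ ha)
    (fun y S hS => hmin y S fun π hπ => hS π fun a ha => hπ a ha) x

/-- In the orbit of `x`, there are at most `|supp x|!` elements with support equal
to `supp x`. -/
theorem stmt7 {𝕍 X : Type*} [Infinite 𝕍] [MulAction (FinPerm 𝕍) X]
    (supp : X → Finset 𝕍)
    (hsupp : ∀ (x : X) (π : FinPerm 𝕍), (∀ a ∈ supp x, π • a = a) → π • x = x)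
    (hmin : ∀ (x : X) (S : Finset 𝕍),
      (∀ π : FinPerm 𝕍, (∀ a ∈ S, π • a = a) → π • x = x) → supp x ⊆ S)
    (x : X) :
    {y | y ∈ MulAction.orbit (FinPerm 𝕍) x ∧ supp y = supp x}.Finite ∧
    {y | y ∈ MulAction.orbit (FinPerm 𝕍) x ∧ supp y = supp x}.ncard
      ≤ Nat.factorial (supp x).card :=
  stmt7_general supp hsupp hmin x
end

section
/- Let X be a strong nominal set, O ⊆ X a set containing exactly one element from each orbit of X, Y a nominal set, and f₀ : O → Y a function with supp(f₀(x)) ⊆ supp(x) for all x ∈ O. Then f₀ extends uniquely to an equivariant map f : X → Y. -/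
/-!
An equivariant map is determined by its values on orbit representatives, and a value `f₀ o`
can be transported along the orbit of `o` by `g • o ↦ g • f₀ o` exactly when the stabilizer of
`o` fixes `f₀ o`. For a strongly supported `o`, its stabilizer fixes `supp o` pointwise, hence
fixes `supp (f₀ o) ⊆ supp o` pointwise, hence fixes `f₀ o`.
-/

namespace MulAction

variable {G X Y : Type*} [Group G] [MulAction G X] [MulAction G Y]

theorem smul_eq_smul_of_stabilizer_le {x : X} {y : Y} (h : stabilizer G x ≤ stabilizer G y)
    {g g' : G} (hg : g • x = g' • x) : g • y = g' • y := by
  have hx : g'⁻¹ * g ∈ stabilizer G x := by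
    rw [mem_stabilizer_iff, mul_smul, hg, inv_smul_smul]
  have hy := h hx
  rwa [mem_stabilizer_iff, mul_smul, inv_smul_eq_iff] at hy

theorem eq_of_equivariant_of_eqOn_transversal {O : Set X}
    (hO : ∀ x : X, ∃ o ∈ O, x ∈ orbit G o) {f f' : X → Y}
    (hf : ∀ (g : G) (x : X), f (g • x) = g • f x) (hf' : ∀ (g : G) (x : X), f' (g • x) = g • f' x)
    (hff' : Set.EqOn f f' O) : f = f' := by
  funext x
  obtain ⟨o, ho, g, rfl⟩ := hO x
  rw [hf, hf', hff' ho]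

theorem exists_equivariant_extension {O : Set X}
    (hO : ∀ x : X, ∃! o : X, o ∈ O ∧ x ∈ orbit G o) {f₀ : X → Y}
    (hf₀ : ∀ o ∈ O, stabilizer G o ≤ stabilizer G (f₀ o)) :
    ∃ f : X → Y, (∀ (g : G) (x : X), f (g • x) = g • f x) ∧ Set.EqOn f f₀ O := by
  choose rep hrep hrep_unique using hO
  have horbit (x : X) : ∃ g : G, g • rep x = x := mem_orbit_iff.mp (hrep x).2
  choose γ hγ using horbit
  have rep_smul (g : G) (x : X) : rep (g • x) = rep x :=
    (hrep_unique _ _ ⟨(hrep x).1, mem_orbit_iff.mpr ⟨g * γ x, by rw [mul_smul, hγ]⟩⟩).symm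
  refine ⟨fun x => γ x • f₀ (rep x), fun g x => ?_, fun o ho => ?_⟩
  · simp only [rep_smul, ← mul_smul]
    apply smul_eq_smul_of_stabilizer_le (hf₀ _ (hrep x).1)
    rw [mul_smul, hγ, ← rep_smul g, hγ]
  · have hrep_o : rep o = o := (hrep_unique o o ⟨ho, mem_orbit_self o⟩).symm
    have hγ_o : γ o ∈ stabilizer G o := by
      simpa only [mem_stabilizer_iff, hrep_o] using hγ o
    simp only [hrep_o]
    exact hf₀ o ho hγ_o

theorem existsUnique_equivariant_extension {O : Set X}
    (hO : ∀ x : X, ∃! o : X, o ∈ O ∧ x ∈ orbit G o) {f₀ : X → Y}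
    (hf₀ : ∀ o ∈ O, stabilizer G o ≤ stabilizer G (f₀ o)) :
    ∃! f : X → Y, (∀ (g : G) (x : X), f (g • x) = g • f x) ∧ ∀ x ∈ O, f x = f₀ x := by
  obtain ⟨f, hf, hff₀⟩ := exists_equivariant_extension hO hf₀
  refine ⟨f, ⟨hf, hff₀⟩, fun f' ⟨hf', hf'f₀⟩ => ?_⟩
  refine eq_of_equivariant_of_eqOn_transversal (fun x => (hO x).exists) hf' hf fun o ho => ?_
  rw [hf'f₀ o ho, hff₀ ho]

end MulAction

theorem stmt11_general {𝕍 X Y : Type*}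
    [MulAction (FinPerm 𝕍) X] [MulAction (FinPerm 𝕍) Y]
    (suppX : X → Finset 𝕍) (suppY : Y → Finset 𝕍)
    (hY : ∀ (y : Y) (π : FinPerm 𝕍), (∀ a ∈ suppY y, π • a = a) → π • y = y)
    (hstrong : ∀ (x : X) (π : FinPerm 𝕍), π • x = x → ∀ a ∈ suppX x, π • a = a)
    (O : Set X) (hO : ∀ x : X, ∃! o : X, o ∈ O ∧ x ∈ MulAction.orbit (FinPerm 𝕍) o)
    (f₀ : X → Y) (hf₀ : ∀ x ∈ O, suppY (f₀ x) ⊆ suppX x) :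
    ∃! f : X → Y, (∀ (π : FinPerm 𝕍) (x : X), f (π • x) = π • f x) ∧
      ∀ x ∈ O, f x = f₀ x :=
  MulAction.existsUnique_equivariant_extension hO fun o ho π hπ =>
    hY (f₀ o) π fun a ha => hstrong o π hπ a (hf₀ o ho ha)

/-- Extension property of strong nominal sets: a map `f₀` defined on a set `O` of orbit
representatives with `supp (f₀ x) ⊆ supp x` extends uniquely to an equivariant map. -/
theorem stmt11 {𝕍 X Y : Type*} [Infinite 𝕍]
    [MulAction (FinPerm 𝕍) X] [MulAction (FinPerm 𝕍) Y]
    (suppX : X → Finset 𝕍) (suppY : Y → Finset 𝕍)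
    (hX : ∀ (x : X) (π : FinPerm 𝕍), (∀ a ∈ suppX x, π • a = a) → π • x = x)
    (hXmin : ∀ (x : X) (S : Finset 𝕍),
      (∀ π : FinPerm 𝕍, (∀ a ∈ S, π • a = a) → π • x = x) → suppX x ⊆ S)
    (hY : ∀ (y : Y) (π : FinPerm 𝕍), (∀ a ∈ suppY y, π • a = a) → π • y = y)
    (hYmin : ∀ (y : Y) (S : Finset 𝕍),
      (∀ π : FinPerm 𝕍, (∀ a ∈ S, π • a = a) → π • y = y) → suppY y ⊆ S)
    (hstrong : ∀ (x : X) (π : FinPerm 𝕍), π • x = x → ∀ a ∈ suppX x, π • a = a)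
    (O : Set X) (hO : ∀ x : X, ∃! o : X, o ∈ O ∧ x ∈ MulAction.orbit (FinPerm 𝕍) o)
    (f₀ : X → Y) (hf₀ : ∀ x ∈ O, suppY (f₀ x) ⊆ suppX x) :
    ∃! f : X → Y, (∀ (π : FinPerm 𝕍) (x : X), f (π • x) = π • f x) ∧
      ∀ x ∈ O, f x = f₀ x :=
  stmt11_general suppX suppY hY hstrong O hO f₀ hf₀
end

section
/- Let e : X → Y be an equivariant map between nominal sets, x ∈ X, and S a finite set of atoms with supp(e(x)) ⊆ S and |supp(x)| ≤ |S|. Then there exists a finite permutation π of the atoms such that supp(π·x) ⊆ S and e(π·x) = e(x). -/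
open Finset

section Support

variable {G 𝕍 X Y : Type*} [Group G] [MulAction G 𝕍] [MulAction G X] [MulAction G Y]

theorem supp_apply_subset_of_equivariant (suppX : X → Finset 𝕍) (suppY : Y → Finset 𝕍)
    (hX : ∀ (x : X) (π : G), (∀ a ∈ suppX x, π • a = a) → π • x = x)
    (hYmin : ∀ (y : Y) (S : Finset 𝕍),
      (∀ π : G, (∀ a ∈ S, π • a = a) → π • y = y) → suppY y ⊆ S)
    (e : X → Y) (he : ∀ (π : G) (x : X), e (π • x) = π • e x) (x : X) :
    suppY (e x) ⊆ suppX x :=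
  hYmin (e x) (suppX x) fun π hπ => by rw [← he, hX x π hπ]

theorem supp_smul_subset_of_mapsTo (suppX : X → Finset 𝕍)
    (hX : ∀ (x : X) (π : G), (∀ a ∈ suppX x, π • a = a) → π • x = x)
    (hXmin : ∀ (x : X) (S : Finset 𝕍),
      (∀ π : G, (∀ a ∈ S, π • a = a) → π • x = x) → suppX x ⊆ S)
    {x : X} {π : G} {S : Finset 𝕍} (hmaps : ∀ a ∈ suppX x, π • a ∈ S) :
    suppX (π • x) ⊆ S := by
  refine hXmin _ S fun τ hτ => ?_
  have hconj : (π⁻¹ * τ * π) • x = x := hX x _ fun a ha => by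
    rw [mul_smul, mul_smul, hτ _ (hmaps a ha), inv_smul_smul]
  calc τ • π • x = π • (π⁻¹ * τ * π) • x := by
        simp only [smul_smul, mul_assoc, mul_inv_cancel_left]
    _ = π • x := by rw [hconj]

end Support

theorem exists_perm_mapsTo_of_disjoint {α : Type*} [DecidableEq α] {A B : Finset α}
    (hAB : Disjoint A B) (hcard : #A = #B) :
    ∃ σ : Equiv.Perm α, (∀ a ∈ A, σ a ∈ B) ∧ ∀ a ∉ A ∪ B, σ a = a := by
  let g : A ≃ B := Finset.equivOfCardEq hcard
  let τ : Equiv.Perm (A ⊕ B) := (Equiv.sumComm A B).trans (Equiv.sumCongr g.symm g)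
  let f := Equiv.Finset.union A B hAB
  refine ⟨τ.extendDomain f, fun a ha => ?_, fun a ha => τ.extendDomain_apply_not_subtype f ha⟩
  have himage := τ.extendDomain_apply_image f (Sum.inl ⟨a, ha⟩)
  simp only [f, Equiv.Finset.union_inl] at himage
  rw [himage]
  exact (g ⟨a, ha⟩).2

theorem exists_finPerm_fixing_inter_mapsTo {𝕍 : Type*} [DecidableEq 𝕍] (A S : Finset 𝕍)
    (hcard : #A ≤ #S) :
    ∃ π : FinPerm 𝕍, (∀ a ∈ A ∩ S, π • a = a) ∧ ∀ a ∈ A, π • a ∈ S := by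
  obtain ⟨B, hBsub, hBcard⟩ :=
    Finset.exists_subset_card_eq (card_sdiff_le_card_sdiff_iff.mpr hcard)
  have hdisj : Disjoint (A \ S) B :=
    disjoint_left.mpr fun a ha hb => (mem_sdiff.mp (hBsub hb)).2 (mem_sdiff.mp ha).1
  obtain ⟨σ, hmaps, hfix⟩ := exists_perm_mapsTo_of_disjoint hdisj hBcard.symm
  have hfinite : σ ∈ FinPerm 𝕍 :=
    ((A \ S) ∪ B).finite_toSet.subset fun a ha => by_contra fun h => ha (hfix a h)
  have hfix_inter : ∀ a ∈ A ∩ S, σ a = a := fun a ha => by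
    obtain ⟨haA, haS⟩ := mem_inter.mp ha
    have hnB : a ∉ B := fun hb => (mem_sdiff.mp (hBsub hb)).2 haA
    exact hfix a (by simp [haS, hnB])
  refine ⟨⟨σ, hfinite⟩, hfix_inter, fun a ha => ?_⟩
  by_cases haS : a ∈ S
  · show σ a ∈ S
    rwa [hfix_inter a (mem_inter.mpr ⟨ha, haS⟩)]
  · exact (mem_sdiff.mp (hBsub (hmaps a (mem_sdiff.mpr ⟨ha, haS⟩)))).1

theorem stmt12_general {𝕍 X Y : Type*}
    [MulAction (FinPerm 𝕍) X] [MulAction (FinPerm 𝕍) Y]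
    (suppX : X → Finset 𝕍) (suppY : Y → Finset 𝕍)
    (hX : ∀ (x : X) (π : FinPerm 𝕍), (∀ a ∈ suppX x, π • a = a) → π • x = x)
    (hXmin : ∀ (x : X) (S : Finset 𝕍),
      (∀ π : FinPerm 𝕍, (∀ a ∈ S, π • a = a) → π • x = x) → suppX x ⊆ S)
    (hY : ∀ (y : Y) (π : FinPerm 𝕍), (∀ a ∈ suppY y, π • a = a) → π • y = y)
    (hYmin : ∀ (y : Y) (S : Finset 𝕍),
      (∀ π : FinPerm 𝕍, (∀ a ∈ S, π • a = a) → π • y = y) → suppY y ⊆ S)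
    (e : X → Y) (he : ∀ (π : FinPerm 𝕍) (x : X), e (π • x) = π • e x)
    (x : X) (S : Finset 𝕍) (h1 : suppY (e x) ⊆ S) (h2 : (suppX x).card ≤ S.card) :
    ∃ π : FinPerm 𝕍, suppX (π • x) ⊆ S ∧ e (π • x) = e x := by
  classical
  have hsupp : suppY (e x) ⊆ suppX x ∩ S :=
    subset_inter (supp_apply_subset_of_equivariant suppX suppY hX hYmin e he x) h1
  obtain ⟨π, hfix, hmaps⟩ := exists_finPerm_fixing_inter_mapsTo (suppX x) S h2
  refine ⟨π, supp_smul_subset_of_mapsTo suppX hX hXmin hmaps, ?_⟩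
  rw [he, hY (e x) π fun a ha => hfix a (hsupp ha)]

/-- If `e : X → Y` is equivariant, `supp (e x) ⊆ S` and `|supp x| ≤ |S|` for a finite set
`S` of atoms, then there is a finite permutation `π` with `supp (π • x) ⊆ S` and
`e (π • x) = e x`. -/
theorem stmt12 {𝕍 X Y : Type*} [Infinite 𝕍]
    [MulAction (FinPerm 𝕍) X] [MulAction (FinPerm 𝕍) Y]
    (suppX : X → Finset 𝕍) (suppY : Y → Finset 𝕍)
    (hX : ∀ (x : X) (π : FinPerm 𝕍), (∀ a ∈ suppX x, π • a = a) → π • x = x)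
    (hXmin : ∀ (x : X) (S : Finset 𝕍),
      (∀ π : FinPerm 𝕍, (∀ a ∈ S, π • a = a) → π • x = x) → suppX x ⊆ S)
    (hY : ∀ (y : Y) (π : FinPerm 𝕍), (∀ a ∈ suppY y, π • a = a) → π • y = y)
    (hYmin : ∀ (y : Y) (S : Finset 𝕍),
      (∀ π : FinPerm 𝕍, (∀ a ∈ S, π • a = a) → π • y = y) → suppY y ⊆ S)
    (e : X → Y) (he : ∀ (π : FinPerm 𝕍) (x : X), e (π • x) = π • e x)
    (x : X) (S : Finset 𝕍) (h1 : suppY (e x) ⊆ S) (h2 : (suppX x).card ≤ S.card) :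
    ∃ π : FinPerm 𝕍, suppX (π • x) ⊆ S ∧ e (π • x) = e x :=
  stmt12_general suppX suppY hX hXmin hY hYmin e he x S h1 h2
end

section
/- Every single-orbit strong nominal set P is isomorphic (as a nominal set) to 𝕍^{n≠}, the nominal set of n-tuples of pairwise distinct atoms, where n = |supp(p)| for any p ∈ P. -/
/-- The nominal set `𝕍^{n≠}` of `n`-tuples of pairwise distinct atoms. -/
abbrev DistinctTuples (𝕍 : Type*) (n : ℕ) : Type _ := {t : Fin n → 𝕍 // Function.Injective t}

instance {𝕍 : Type*} {n : ℕ} : MulAction (FinPerm 𝕍) (DistinctTuples 𝕍 n) where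
  smul π t := ⟨fun i => π • t.1 i, fun _ _ h => t.2 (MulAction.injective π h)⟩
  one_smul t := Subtype.ext (funext fun i => one_smul (FinPerm 𝕍) (t.1 i))
  mul_smul π σ t := Subtype.ext (funext fun i => mul_smul π σ (t.1 i))

open MulAction Equiv

/-!
A transitive action is determined up to equivariant isomorphism by the stabilizer of one point.
For a strong nominal set the stabilizer of `p` is the pointwise stabilizer of `supp p`, which is
also the stabilizer of any tuple enumerating `supp p` without repetition; and the finite
permutations act transitively on `𝕍^{n≠}`.
-/

section Transitive

variable {G X Y : Type*} [Group G] [MulAction G X] [MulAction G Y]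

lemma smul_eq_smul_iff_of_stabilizer_eq {x : X} {y : Y} (h : stabilizer G x = stabilizer G y)
    {g g' : G} : g • x = g' • x ↔ g • y = g' • y := by
  rw [← inv_smul_eq_iff, smul_smul, ← mem_stabilizer_iff, h, mem_stabilizer_iff, ← smul_smul,
    inv_smul_eq_iff]

theorem exists_equiv_smul_of_stabilizer_eq [IsPretransitive G X] [IsPretransitive G Y]
    (x : X) (y : Y) (h : stabilizer G x = stabilizer G y) :
    ∃ e : X ≃ Y, ∀ (g : G) (z : X), e (g • z) = g • e z := by
  choose σ hσ using exists_smul_eq G x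
  have hσy : ∀ (g : G) (z : X), g • x = z → σ z • y = g • y := fun g z hz =>
    (smul_eq_smul_iff_of_stabilizer_eq h).1 (by rw [hσ, hz])
  have hbij : Function.Bijective fun z => σ z • y := by
    refine ⟨fun z z' hzz' => ?_, fun w => ?_⟩
    · rw [← hσ z, ← hσ z']
      exact (smul_eq_smul_iff_of_stabilizer_eq h).2 hzz'
    · obtain ⟨g, rfl⟩ := exists_smul_eq G y w
      exact ⟨g • x, hσy g _ rfl⟩
  refine ⟨Equiv.ofBijective _ hbij, fun g z => ?_⟩
  change σ (g • z) • y = g • σ z • y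
  rw [hσy (g * σ z) (g • z) (by rw [mul_smul, hσ]), mul_smul]

end Transitive

section FinPerm

variable {𝕍 : Type*} {n : ℕ}

lemma FinPerm.smul_def (π : FinPerm 𝕍) (a : 𝕍) : π • a = (π : Perm 𝕍) a := rfl

lemma DistinctTuples.smul_apply (π : FinPerm 𝕍) (t : DistinctTuples 𝕍 n) (i : Fin n) :
    (π • t).1 i = π • t.1 i := rfl

lemma ofSubtype_mem_finPerm [DecidableEq 𝕍] (s : Finset 𝕍) (σ : Perm s) :
    Perm.ofSubtype σ ∈ FinPerm 𝕍 :=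
  s.finite_toSet.subset fun _ ha => by_contra fun h => ha (Perm.ofSubtype_apply_of_not_mem σ h)

instance DistinctTuples.isPretransitive : IsPretransitive (FinPerm 𝕍) (DistinctTuples 𝕍 n) := by
  classical
  refine ⟨fun u v => ?_⟩
  let s : Finset 𝕍 := Finset.univ.image u.1 ∪ Finset.univ.image v.1
  have hu : ∀ i, u.1 i ∈ s := fun i => by simp [s]
  have hv : ∀ i, v.1 i ∈ s := fun i => by simp [s]
  -- permute the finite set `s` containing both tuples, then extend by the identity
  obtain ⟨σ, hσ⟩ := Perm.exists_extending_pair (fun i => (⟨u.1 i, hu i⟩ : s))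
    (fun i => ⟨v.1 i, hv i⟩) (fun i j h => u.2 (congrArg Subtype.val h))
    (fun i j h => v.2 (congrArg Subtype.val h))
  refine ⟨⟨Perm.ofSubtype σ, ofSubtype_mem_finPerm s σ⟩, Subtype.ext (funext fun i => ?_)⟩
  rw [DistinctTuples.smul_apply, FinPerm.smul_def, Subgroup.coe_mk,
    Perm.ofSubtype_apply_of_mem σ (hu i), hσ i]

lemma DistinctTuples.stabilizer_eq (t : DistinctTuples 𝕍 n) :
    stabilizer (FinPerm 𝕍) t = fixingSubgroup (FinPerm 𝕍) (Set.range t.1) := by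
  ext π
  simp [mem_fixingSubgroup_iff, Subtype.ext_iff, funext_iff, DistinctTuples.smul_apply]

noncomputable def Finset.distinctTuple (s : Finset 𝕍) : DistinctTuples 𝕍 s.card :=
  ⟨fun i => s.equivFin.symm i, Subtype.val_injective.comp s.equivFin.symm.injective⟩

lemma Finset.range_distinctTuple (s : Finset 𝕍) : Set.range s.distinctTuple.1 = s := by
  change Set.range (Subtype.val ∘ s.equivFin.symm) = s
  rw [Set.range_comp, Equiv.range_eq_univ, Set.image_univ, Subtype.range_coe_subtype]
  rfl

end FinPerm

theorem stmt13_general {𝕍 P : Type*} [MulAction (FinPerm 𝕍) P]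
    (supp : P → Finset 𝕍)
    (hsupp : ∀ (x : P) (π : FinPerm 𝕍), (∀ a ∈ supp x, π • a = a) → π • x = x)
    (hstrong : ∀ (x : P) (π : FinPerm 𝕍), π • x = x → ∀ a ∈ supp x, π • a = a)
    (htrans : ∀ x y : P, ∃ π : FinPerm 𝕍, π • x = y)
    (p : P) :
    ∃ e : P ≃ DistinctTuples 𝕍 (supp p).card,
      ∀ (π : FinPerm 𝕍) (x : P), e (π • x) = π • e x := by
  have : IsPretransitive (FinPerm 𝕍) P := ⟨htrans⟩
  refine exists_equiv_smul_of_stabilizer_eq p (supp p).distinctTuple ?_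
  rw [DistinctTuples.stabilizer_eq, Finset.range_distinctTuple]
  ext π
  rw [mem_stabilizer_iff, mem_fixingSubgroup_iff]
  exact ⟨hstrong p π, hsupp p π⟩

/-- Every single-orbit strong nominal set `P` is isomorphic, as a nominal set, to the
nominal set `𝕍^{n≠}` of `n`-tuples of distinct atoms, where `n = |supp p|` for `p ∈ P`. -/
theorem stmt13 {𝕍 P : Type*} [Infinite 𝕍] [MulAction (FinPerm 𝕍) P]
    (supp : P → Finset 𝕍)
    (hsupp : ∀ (x : P) (π : FinPerm 𝕍), (∀ a ∈ supp x, π • a = a) → π • x = x)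
    (hmin : ∀ (x : P) (S : Finset 𝕍),
      (∀ π : FinPerm 𝕍, (∀ a ∈ S, π • a = a) → π • x = x) → supp x ⊆ S)
    (hstrong : ∀ (x : P) (π : FinPerm 𝕍), π • x = x → ∀ a ∈ supp x, π • a = a)
    (htrans : ∀ x y : P, ∃ π : FinPerm 𝕍, π • x = y)
    (p : P) :
    ∃ e : P ≃ DistinctTuples 𝕍 (supp p).card,
      ∀ (π : FinPerm 𝕍) (x : P), e (π • x) = π • e x :=
  stmt13_general supp hsupp hstrong htrans p
end

section
/- For any n ≥ 1, the map fill : X^n × X^{2n≠} → X^{n≠} (which removes duplicates from the first tuple and fills the remaining positions with fresh components from the second tuple) satisfies fill(m(v⃗), w⃗) = v⃗ for every v⃗ ∈ X^{n≠} and w⃗ ∈ X^{2n≠}, where m : X^{n≠} ↪ X^n is the inclusion; moreover fill is equivariant when X is a nominal set. -/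
namespace List

variable {α β : Type*} [DecidableEq α]

theorem take_length_dedup_append_of_nodup {v : List α} (hv : v.Nodup) (u : List α) :
    (v.dedup ++ u).take v.length = v := by
  rw [hv.dedup, take_left]

theorem filter_not_mem_map_of_injective [DecidableEq β] {f : α → β}
    (hf : Function.Injective f) (v w : List α) :
    (w.map f).filter (fun y => y ∉ v.map f) = (w.filter fun x => x ∉ v).map f := by
  rw [filter_map]
  congr 1
  exact filter_congr fun x _ => by simp only [Function.comp_apply, mem_map_of_injective hf]

end List

theorem stmt16_general {X : Type*} [DecidableEq X] (n : ℕ) :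
    (∀ v w : List X, v.length = n → v.Nodup → w.length = 2 * n → w.Nodup →
      ((v.dedup ++ w.filter fun x => x ∉ v).take n = v)) ∧
    (∀ (π : Equiv.Perm X) (v w : List X),
      (((v.map ⇑π).dedup ++ (w.map ⇑π).filter fun x => x ∉ v.map ⇑π).take n)
        = ((v.dedup ++ w.filter fun x => x ∉ v).take n).map ⇑π) := by
  refine ⟨fun v w hv hvnd _ _ => hv ▸ List.take_length_dedup_append_of_nodup hvnd _,
    fun π v w => ?_⟩
  rw [List.dedup_map_of_injective π.injective,
    List.filter_not_mem_map_of_injective π.injective, ← List.map_append, List.map_take]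

/-- The map `fill : Xⁿ × X^{2n≠} → X^{n≠}`, given by
`fill v w = take n (dedup v ++ (components of w not in v))`, restricts to the identity on
`X^{n≠}` (i.e. `fill (m v) w = v` for `v` a tuple of distinct elements), and it is
equivariant: it commutes with the componentwise action of every permutation of `X`. -/
theorem stmt16 {X : Type*} [DecidableEq X] (n : ℕ) (hn : 1 ≤ n) :
    (∀ v w : List X, v.length = n → v.Nodup → w.length = 2 * n → w.Nodup →
      ((v.dedup ++ w.filter fun x => x ∉ v).take n = v)) ∧
    (∀ (π : Equiv.Perm X) (v w : List X),
      (((v.map ⇑π).dedup ++ (w.map ⇑π).filter fun x => x ∉ v.map ⇑π).take n)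
        = ((v.dedup ++ w.filter fun x => x ∉ v).take n).map ⇑π) :=
  stmt16_general n
end

section
/- For every nominal set X and every n, the restriction map r_X : X^{𝕍^n} → X^{𝕍^{n≠}}, sending a finitely supported function g : 𝕍^n → X to its restriction to tuples of distinct atoms, is surjective. -/
/-!
Extend `f` to tuples with a repeated atom by the constant value `f t₀`, for one fixed tuple
`t₀` of distinct atoms (it exists because there are infinitely many atoms). Permutations
preserve injectivity of tuples, so this extension is supported by the support of `f` together
with the atoms of `t₀`: a permutation fixing all of them fixes `t₀`, hence the value `f t₀`.
-/

open Function

theorem injective_smul_iff {G α ι : Type*} [Group G] [MulAction G α] (g : G) (v : ι → α) :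
    Injective (g • v) ↔ Injective v :=
  (MulAction.injective g).of_comp_iff v

namespace DistinctTuples

variable {𝕍 X : Type*} {n : ℕ}

noncomputable def ofInfinite [Infinite 𝕍] (n : ℕ) : DistinctTuples 𝕍 n :=
  ⟨Fin.valEmbedding.trans (Infinite.natEmbedding 𝕍), Embedding.injective _⟩

theorem smul_eq_self {π : FinPerm 𝕍} {t : DistinctTuples 𝕍 n} (h : ∀ i, π • t.1 i = t.1 i) :
    π • t = t :=
  Subtype.ext (funext h)

open Classical in
noncomputable def extend (f : DistinctTuples 𝕍 n → X) (x₀ : X) (v : Fin n → 𝕍) : X :=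
  if h : Injective v then f ⟨v, h⟩ else x₀

theorem extend_val (f : DistinctTuples 𝕍 n → X) (x₀ : X) (t : DistinctTuples 𝕍 n) :
    extend f x₀ t.1 = f t :=
  dif_pos t.2

theorem smul_extend_inv_smul [MulAction (FinPerm 𝕍) X] {f : DistinctTuples 𝕍 n → X} {x₀ : X}
    {π : FinPerm 𝕍} (hf : ∀ t, π • f (π⁻¹ • t) = f t) (hx₀ : π • x₀ = x₀) (v : Fin n → 𝕍) :
    π • extend f x₀ (π⁻¹ • v) = extend f x₀ v := by
  by_cases hv : Injective v
  · have hv' : Injective (π⁻¹ • v) := (injective_smul_iff π⁻¹ v).2 hv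
    have hinv : π⁻¹ • (⟨v, hv⟩ : DistinctTuples 𝕍 n) = ⟨π⁻¹ • v, hv'⟩ := rfl
    simpa [extend, hv, hv', hinv] using hf ⟨v, hv⟩
  · have hv' : ¬Injective (π⁻¹ • v) := (injective_smul_iff π⁻¹ v).not.2 hv
    simpa [extend, hv, hv'] using hx₀

end DistinctTuples

/-- The restriction map `r_X : X^{𝕍ⁿ} → X^{𝕍^{n≠}}` on finitely supported functions
(with the conjugation action `(π ⋆ f) y = π • f (π⁻¹ • y)`) is surjective: every finitely
supported function on tuples of distinct atoms extends to a finitely supported function on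
all tuples of atoms. -/
theorem stmt17 {𝕍 : Type*} [Infinite 𝕍] (n : ℕ) (X : Type*) [MulAction (FinPerm 𝕍) X]
    (f : DistinctTuples 𝕍 n → X)
    (hf : ∃ S : Finset 𝕍, ∀ π : FinPerm 𝕍, (∀ a ∈ S, π • a = a) →
      ∀ t : DistinctTuples 𝕍 n, π • f (π⁻¹ • t) = f t) :
    ∃ g : (Fin n → 𝕍) → X,
      (∃ S : Finset 𝕍, ∀ π : FinPerm 𝕍, (∀ a ∈ S, π • a = a) →
        ∀ v : Fin n → 𝕍, π • g (π⁻¹ • v) = g v) ∧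
      ∀ t : DistinctTuples 𝕍 n, g t.1 = f t := by
  classical
  obtain ⟨S, hS⟩ := hf
  let t₀ : DistinctTuples 𝕍 n := DistinctTuples.ofInfinite n
  refine ⟨DistinctTuples.extend f (f t₀), ⟨S ∪ Finset.univ.image t₀.1, fun π hπ => ?_⟩,
    DistinctTuples.extend_val f _⟩
  have hfπ := hS π fun a ha => hπ a (Finset.mem_union_left _ ha)
  have ht₀ : π⁻¹ • t₀ = t₀ := DistinctTuples.smul_eq_self fun i => inv_smul_eq_iff.2 <|
    (hπ _ <| Finset.mem_union_right _ <| Finset.mem_image_of_mem _ <| Finset.mem_univ i).symm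
  have hx₀ : π • f t₀ = f t₀ := by simpa only [ht₀] using hfπ t₀
  exact DistinctTuples.smul_extend_inv_smul hfπ hx₀
end

section
/- Define F X = 𝕍 × X × (∐_{n ∈ ℕ} 𝕍^n × X^n) and the map q̄_X : FX × 𝕍 → X by q̄_X(a, d, v⃗, x⃗, b) = x_i where i is minimal with v_i = b, and q̄_X(a, d, v⃗, x⃗, b) = (a b)·d if no such i exists. Then the curried map q_X : FX → X^𝕍 is surjective: for any finitely supported f : 𝕍 → X, taking {v₁,…,vₙ} = supp(f) and a ∉ supp(f), one has q_X(a, f(a), v⃗, f(v⃗)) = f. -/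
/-- The transposition `(a b)` as an element of the group of finite permutations. -/
def swapFP (𝕍 : Type*) [DecidableEq 𝕍] (a b : 𝕍) : FinPerm 𝕍 :=
  ⟨Equiv.swap a b, by
    show {x | Equiv.swap a b x ≠ x}.Finite
    apply Set.Finite.subset ((Set.finite_singleton b).insert a)
    intro x hx
    simp only [Set.mem_setOf_eq] at hx
    rw [Set.mem_insert_iff, Set.mem_singleton_iff]
    by_contra h
    push_neg at h
    exact hx (Equiv.swap_apply_of_ne_of_ne h.1 h.2)⟩

open Classical in
/-- The map `q̄_X : FX × 𝕍 → X` for `FX = 𝕍 × X × ∐ₙ 𝕍ⁿ × Xⁿ`: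
`q̄ (a, d, v⃗, x⃗, b) = xᵢ` for the minimal `i` with `vᵢ = b`, and
`q̄ (a, d, v⃗, x⃗, b) = (a b) • d` if no such `i` exists. -/
noncomputable def qbar {𝕍 X : Type*} [DecidableEq 𝕍] [MulAction (FinPerm 𝕍) X]
    (a : 𝕍) (d : X) {n : ℕ} (v : Fin n → 𝕍) (x : Fin n → X) (b : 𝕍) : X :=
  if h : ∃ m : ℕ, ∃ hm : m < n, v ⟨m, hm⟩ = b then
    x ⟨Nat.find h, (Nat.find_spec h).1⟩
  else (swapFP 𝕍 a b) • d

section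

variable {𝕍 X : Type*} [DecidableEq 𝕍] [MulAction (FinPerm 𝕍) X]

def SupportsFun (S : Finset 𝕍) (f : 𝕍 → X) : Prop :=
  ∀ π : FinPerm 𝕍, (∀ c ∈ S, π • c = c) → ∀ b : 𝕍, π • f (π⁻¹ • b) = f b

theorem swapFP_smul_of_ne {a b c : 𝕍} (ha : c ≠ a) (hb : c ≠ b) : swapFP 𝕍 a b • c = c :=
  Equiv.swap_apply_of_ne_of_ne ha hb

theorem swapFP_inv_smul_right (a b : 𝕍) : (swapFP 𝕍 a b)⁻¹ • b = a := by
  change (Equiv.swap a b)⁻¹ b = a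
  rw [Equiv.swap_inv, Equiv.swap_apply_right]

theorem SupportsFun.swapFP_smul_apply {S : Finset 𝕍} {f : 𝕍 → X} (hS : SupportsFun S f)
    {a b : 𝕍} (ha : a ∉ S) (hb : b ∉ S) : swapFP 𝕍 a b • f a = f b := by
  have hfix : ∀ c ∈ S, swapFP 𝕍 a b • c = c := fun c hc =>
    swapFP_smul_of_ne (ne_of_mem_of_not_mem hc ha) (ne_of_mem_of_not_mem hc hb)
  simpa only [swapFP_inv_smul_right] using hS _ hfix b

theorem qbar_comp_of_mem_range (a : 𝕍) (d : X) {n : ℕ} (v : Fin n → 𝕍) (f : 𝕍 → X) {b : 𝕍}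
    (hb : b ∈ Set.range v) : qbar a d v (f ∘ v) b = f b := by
  have h : ∃ m : ℕ, ∃ hm : m < n, v ⟨m, hm⟩ = b := by
    obtain ⟨i, rfl⟩ := hb
    exact ⟨i, i.isLt, rfl⟩
  rw [qbar, dif_pos h]
  exact congrArg f (Nat.find_spec h).2

theorem qbar_of_notMem_range (a : 𝕍) (d : X) {n : ℕ} (v : Fin n → 𝕍) (x : Fin n → X)
    {b : 𝕍} (hb : b ∉ Set.range v) : qbar a d v x b = swapFP 𝕍 a b • d := by
  have h : ¬∃ m : ℕ, ∃ hm : m < n, v ⟨m, hm⟩ = b := fun ⟨m, hm, hvm⟩ => hb ⟨_, hvm⟩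
  rw [qbar, dif_neg h]

end

theorem stmt18_general {𝕍 X : Type*} [DecidableEq 𝕍] [MulAction (FinPerm 𝕍) X]
    (f : 𝕍 → X) (S : Finset 𝕍)
    (hS : ∀ π : FinPerm 𝕍, (∀ c ∈ S, π • c = c) → ∀ b : 𝕍, π • f (π⁻¹ • b) = f b)
    {n : ℕ} (v : Fin n → 𝕍)
    (hrange : Finset.image v Finset.univ = S)
    (a : 𝕍) (ha : a ∉ S) :
    ∀ b : 𝕍, qbar a (f a) v (f ∘ v) b = f b := by
  intro b
  by_cases hb : b ∈ Set.range v
  · exact qbar_comp_of_mem_range a (f a) v f hb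
  · have hbS : b ∉ S := by simpa [← hrange] using hb
    rw [qbar_of_notMem_range a (f a) v (f ∘ v) hb]
    exact SupportsFun.swapFP_smul_apply hS ha hbS

/-- The curried map `q_X : FX → X^𝕍` is surjective: for every finitely supported
`f : 𝕍 → X` with least support `S = {v₁, …, vₙ}` and any `a ∉ S`, one has
`q (a, f a, v⃗, f ∘ v⃗) = f`. -/
theorem stmt18 {𝕍 X : Type*} [DecidableEq 𝕍] [Infinite 𝕍] [MulAction (FinPerm 𝕍) X]
    (f : 𝕍 → X) (S : Finset 𝕍)
    (hS : ∀ π : FinPerm 𝕍, (∀ c ∈ S, π • c = c) → ∀ b : 𝕍, π • f (π⁻¹ • b) = f b)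
    (hSmin : ∀ T : Finset 𝕍,
      (∀ π : FinPerm 𝕍, (∀ c ∈ T, π • c = c) → ∀ b : 𝕍, π • f (π⁻¹ • b) = f b) → S ⊆ T)
    {n : ℕ} (v : Fin n → 𝕍) (hv : Function.Injective v)
    (hrange : Finset.image v Finset.univ = S)
    (a : 𝕍) (ha : a ∉ S) :
    ∀ b : 𝕍, qbar a (f a) v (f ∘ v) b = f b :=
  stmt18_general f S hS v hrange a ha
end
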